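/- arXiv:2312.13132 — 4 statements merged into one kernel-verified Lean document; each statement's English description precedes it below -/
import Mathlib

section
/- In a finite two-player reachability game on a directed arena G = (V, V_R, V_S, E, F) where every vertex has at least one outgoing edge, exactly one of the players (the reachability player or the safety player) has a memoryless winning strategy from any given initial vertex. -/
/-!
The reachability player wins exactly from the attractor of `F`: the increasing union of the sets
`attractor n` of vertices from which they can force a visit to `F` within `n` moves. Moving to a
successor of least attractor rank is a memoryless winning strategy on it. In a finite arena the
levels stabilise, so the complement of the attractor is a trap: the safety player can always stay
in it and the reachability player cannot leave it, which gives a memoryless winning strategy for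
the safety player. The two players cannot both win, since their strategies together determine a
single play.
-/

namespace ReachabilityGame

variable {V : Type*} (VR : Set V) (E : V → V → Prop) (F : Set V)

def attractor : ℕ → Set V
  | 0 => F
  | n + 1 => attractor n ∪ {v | (v ∈ VR ∧ ∃ u, E v u ∧ u ∈ attractor n) ∨
      (v ∉ VR ∧ ∀ u, E v u → u ∈ attractor n)}

def IsReachWinning (σ : V → V) (v0 : V) : Prop :=
  ∀ p : ℕ → V, p 0 = v0 → (∀ i, E (p i) (p (i + 1))) →
    (∀ i, p i ∈ VR → p (i + 1) = σ (p i)) → ∃ i, p i ∈ F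

def IsSafeWinning (τ : V → V) (v0 : V) : Prop :=
  ∀ p : ℕ → V, p 0 = v0 → (∀ i, E (p i) (p (i + 1))) →
    (∀ i, p i ∉ VR → p (i + 1) = τ (p i)) → ∀ i, p i ∉ F

variable {VR E F}

lemma attractor_mono : Monotone (attractor VR E F) :=
  monotone_nat_of_le_succ fun _ => Set.subset_union_left

lemma exists_edge_mem_attractor {n : ℕ} {v : V} (hR : v ∈ VR) (hF : v ∉ F)
    (hv : v ∈ attractor VR E F (n + 1)) : ∃ u, E v u ∧ u ∈ attractor VR E F n := by
  induction n with
  | zero =>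
    rcases hv with hv | (⟨-, hu⟩ | ⟨hS, -⟩)
    exacts [absurd hv hF, hu, absurd hR hS]
  | succ n ih =>
    rcases hv with hv | (⟨-, hu⟩ | ⟨hS, -⟩)
    · obtain ⟨u, hE, hu⟩ := ih hv
      exact ⟨u, hE, attractor_mono n.le_succ hu⟩
    exacts [hu, absurd hR hS]

lemma exists_attractor_strategy (htotal : ∀ v, ∃ u, E v u) :
    ∃ σ : V → V, (∀ v, E v (σ v)) ∧ ∀ n v, v ∈ VR → v ∉ F →
      v ∈ attractor VR E F (n + 1) → σ v ∈ attractor VR E F n := by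
  classical
  have hchoice : ∀ v, ∃ u, E v u ∧ ∀ n, v ∈ VR → v ∉ F →
      v ∈ attractor VR E F (n + 1) → u ∈ attractor VR E F n := by
    intro v
    by_cases h : ∃ m u, E v u ∧ u ∈ attractor VR E F m
    · obtain ⟨u, hE, hu⟩ := Nat.find_spec h
      refine ⟨u, hE, fun n hR hF hv => attractor_mono ?_ hu⟩
      exact Nat.find_min' h (exists_edge_mem_attractor hR hF hv)
    · obtain ⟨u, hE⟩ := htotal v
      exact ⟨u, hE, fun n hR hF hv => (h ⟨n, exists_edge_mem_attractor hR hF hv⟩).elim⟩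
  choose σ hσE hσ using hchoice
  exact ⟨σ, hσE, fun n v => hσ v n⟩

lemma exists_mem_of_mem_attractor {σ : V → V}
    (hσ : ∀ n v, v ∈ VR → v ∉ F → v ∈ attractor VR E F (n + 1) → σ v ∈ attractor VR E F n)
    {p : ℕ → V} (hE : ∀ i, E (p i) (p (i + 1))) (hp : ∀ i, p i ∈ VR → p (i + 1) = σ (p i))
    (n i : ℕ) (hi : p i ∈ attractor VR E F n) : ∃ j, p j ∈ F := by
  induction n generalizing i with
  | zero => exact ⟨i, hi⟩
  | succ n ih =>
    by_cases hF : p i ∈ F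
    · exact ⟨i, hF⟩
    by_cases hR : p i ∈ VR
    · exact ih (i + 1) (hp i hR ▸ hσ n (p i) hR hF hi)
    rcases hi with hi | (⟨hR', -⟩ | ⟨-, hall⟩)
    exacts [ih i hi, absurd hR' hR, ih (i + 1) (hall _ (hE i))]

lemma exists_isReachWinning (htotal : ∀ v, ∃ u, E v u) {n : ℕ} {v0 : V}
    (hv0 : v0 ∈ attractor VR E F n) :
    ∃ σ : V → V, (∀ v, E v (σ v)) ∧ IsReachWinning VR E F σ v0 := by
  obtain ⟨σ, hσE, hσ⟩ := exists_attractor_strategy htotal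
  exact ⟨σ, hσE, fun p hp0 hE hp =>
    exists_mem_of_mem_attractor hσ hE hp n 0 (hp0 ▸ hv0)⟩

lemma exists_isSafeWinning_of_trap (htotal : ∀ v, ∃ u, E v u) {S : Set V}
    (hSF : ∀ v ∈ S, v ∉ F) (hR : ∀ v ∈ S, v ∈ VR → ∀ u, E v u → u ∈ S)
    (hS : ∀ v ∈ S, v ∉ VR → ∃ u, E v u ∧ u ∈ S) {v0 : V} (hv0 : v0 ∈ S) :
    ∃ τ : V → V, (∀ v, E v (τ v)) ∧ IsSafeWinning VR E F τ v0 := by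
  classical
  have hchoice : ∀ v, ∃ u, E v u ∧ (v ∈ S → v ∉ VR → u ∈ S) := by
    intro v
    by_cases h : v ∈ S ∧ v ∉ VR
    · obtain ⟨u, hE, hu⟩ := hS v h.1 h.2
      exact ⟨u, hE, fun _ _ => hu⟩
    · obtain ⟨u, hE⟩ := htotal v
      exact ⟨u, hE, fun hv hv' => (h ⟨hv, hv'⟩).elim⟩
  choose τ hτE hτ using hchoice
  refine ⟨τ, hτE, fun p hp0 hE hp i => hSF _ ?_⟩
  induction i with
  | zero => exact hp0 ▸ hv0
  | succ i ih =>
    by_cases hVR : p i ∈ VR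
    · exact hR _ ih hVR _ (hE i)
    · exact hp i hVR ▸ hτ _ ih hVR

variable (VR E F) in
lemma exists_attractor_succ_eq [Finite V] :
    ∃ N, attractor VR E F (N + 1) = attractor VR E F N := by
  obtain ⟨N, hN⟩ := WellFoundedGT.monotone_chain_condition ⟨_, attractor_mono (VR := VR)⟩
  exact ⟨N, (hN (N + 1) N.le_succ).symm⟩

lemma exists_isSafeWinning (htotal : ∀ v, ∃ u, E v u) {N : ℕ}
    (hN : attractor VR E F (N + 1) = attractor VR E F N) {v0 : V}
    (hv0 : v0 ∉ attractor VR E F N) :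
    ∃ τ : V → V, (∀ v, E v (τ v)) ∧ IsSafeWinning VR E F τ v0 := by
  refine exists_isSafeWinning_of_trap htotal (S := (attractor VR E F N)ᶜ)
    (fun v hv hF => hv (attractor_mono N.zero_le hF)) (fun v hv hR u hE hu => ?_)
    (fun v hv hS => ?_) hv0
  · exact hv (hN ▸ Or.inr (Or.inl ⟨hR, u, hE, hu⟩))
  · by_contra! hall
    exact hv (hN ▸ Or.inr (Or.inr ⟨hS, fun u hE => not_not.1 (hall u hE)⟩))

lemma not_isReachWinning_and_isSafeWinning {σ τ : V → V} (hσE : ∀ v, E v (σ v))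
    (hτE : ∀ v, E v (τ v)) (v0 : V) :
    ¬ (IsReachWinning VR E F σ v0 ∧ IsSafeWinning VR E F τ v0) := by
  classical
  rintro ⟨hσ, hτ⟩
  set step : V → V := fun v => if v ∈ VR then σ v else τ v
  have hstep : ∀ i, step^[i + 1] v0 = step (step^[i] v0) := fun i =>
    Function.iterate_succ_apply' step i v0
  have hE : ∀ i, E (step^[i] v0) (step^[i + 1] v0) := by
    intro i
    rw [hstep]
    by_cases h : step^[i] v0 ∈ VR
    · simp only [step, if_pos h, hσE]
    · simp only [step, if_neg h, hτE]
  obtain ⟨i, hi⟩ := hσ (step^[·] v0) rfl hE fun i h => by simp only [hstep, step, if_pos h]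
  exact hτ (step^[·] v0) rfl hE (fun i h => by simp only [hstep, step, if_neg h]) i hi

end ReachabilityGame

open ReachabilityGame in
/-- In a finite two-player reachability game on a directed arena
where every vertex has an outgoing edge, exactly one of the two players has a
memoryless winning strategy from any given initial vertex. -/
theorem stmt_0 (V : Type) [Fintype V] (VR : Set V) (E : V → V → Prop) (F : Set V)
    (htotal : ∀ v, ∃ u, E v u) (v0 : V) :
    Xor'
      (∃ σ : V → V, (∀ v, E v (σ v)) ∧
        ∀ p : ℕ → V, p 0 = v0 → (∀ i, E (p i) (p (i + 1))) →
          (∀ i, p i ∈ VR → p (i + 1) = σ (p i)) → ∃ i, p i ∈ F)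
      (∃ τ : V → V, (∀ v, E v (τ v)) ∧
        ∀ p : ℕ → V, p 0 = v0 → (∀ i, E (p i) (p (i + 1))) →
          (∀ i, p i ∉ VR → p (i + 1) = τ (p i)) → ∀ i, p i ∉ F) := by
  refine (xor_iff_or_and_not_and _ _).2 ⟨?_, fun ⟨⟨σ, hσE, hσ⟩, ⟨τ, hτE, hτ⟩⟩ =>
    not_isReachWinning_and_isSafeWinning hσE hτE v0 ⟨hσ, hτ⟩⟩
  obtain ⟨N, hN⟩ := exists_attractor_succ_eq VR E F
  by_cases hv0 : v0 ∈ attractor VR E F N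
  · exact Or.inl (exists_isReachWinning htotal hv0)
  · exact Or.inr (exists_isSafeWinning htotal hN hv0)
end

section
/- The attractor of a target set F in a finite reachability game, defined as the least fixed point of the one-step attractor operator, equals the set of vertices from which the reachability player has a winning strategy. -/
/-- One-step attractor operator: keep A, add reachability-player vertices with
some successor in A, and safety-player vertices all of whose successors are in A. -/
def attrStep {V : Type} (VR : Set V) (E : V → V → Prop) (A : Set V) : Set V :=
  A ∪ {v | v ∈ VR ∧ ∃ u, E v u ∧ u ∈ A} ∪ {v | v ∉ VR ∧ ∀ u, E v u → u ∈ A}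

/-!
If `v` enters the attractor at stage `n`, the reachability player moves from each
of her vertices to a successor of least stage; along any play consistent with this strategy the
stage strictly decreases until `F` (stage `0`) is reached. Conversely, since `V` is finite the
iterates stabilise, so the attractor is a fixed point of `attrStep`: from a vertex outside it,
the reachability player's move stays outside, and the safety player always has a move staying
outside, so the safety player can keep any play away from `F` forever.
-/

namespace attrStep

variable {V : Type} {VR : Set V} {E : V → V → Prop}

lemma subset_apply (A : Set V) : A ⊆ attrStep VR E A :=
  fun _ hv => Or.inl (Or.inl hv)

lemma monotone_iterate (F : Set V) : Monotone fun n => (attrStep VR E)^[n] F :=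
  monotone_nat_of_le_succ fun n => by
    rw [Function.iterate_succ_apply']
    exact subset_apply _

lemma iUnion_iterate_eq_of_finite [Finite V] (F : Set V) :
    ∃ N, (⋃ i, (attrStep VR E)^[i] F) = (attrStep VR E)^[N] F := by
  obtain ⟨N, hN⟩ :=
    WellFoundedGT.monotone_chain_condition ⟨_, monotone_iterate (VR := VR) (E := E) F⟩
  refine ⟨N, subset_antisymm (Set.iUnion_subset fun i => ?_)
    (Set.subset_iUnion (fun i => (attrStep VR E)^[i] F) N)⟩
  calc (attrStep VR E)^[i] F ⊆ (attrStep VR E)^[max i N] F := monotone_iterate F (le_max_left i N)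
    _ = (attrStep VR E)^[N] F := (hN _ (le_max_right i N)).symm

lemma apply_iUnion_iterate_subset [Finite V] (F : Set V) :
    attrStep VR E (⋃ i, (attrStep VR E)^[i] F) ⊆ ⋃ i, (attrStep VR E)^[i] F := by
  obtain ⟨N, hN⟩ := iUnion_iterate_eq_of_finite (VR := VR) (E := E) F
  calc attrStep VR E (⋃ i, (attrStep VR E)^[i] F) = (attrStep VR E)^[N + 1] F := by
        rw [hN, Function.iterate_succ_apply']
    _ ⊆ ⋃ i, (attrStep VR E)^[i] F :=
        Set.subset_iUnion (fun i => (attrStep VR E)^[i] F) (N + 1)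

end attrStep

section Plays

variable {V : Type} {VR : Set V} {E : V → V → Prop}

def IsConsistentPlay (VR : Set V) (E : V → V → Prop) (σ : V → V) (p : ℕ → V) : Prop :=
  (∀ i, E (p i) (p (i + 1))) ∧ ∀ i, p i ∈ VR → p (i + 1) = σ (p i)

lemma IsConsistentPlay.tail {σ : V → V} {p : ℕ → V} (hp : IsConsistentPlay VR E σ p) :
    IsConsistentPlay VR E σ fun i => p (i + 1) :=
  ⟨fun i => hp.1 (i + 1), fun i => hp.2 (i + 1)⟩

lemma IsConsistentPlay.exists_mem_of_mem_iterate {F : Set V} {σ : V → V}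
    (hσ : ∀ v ∈ VR, ∀ u n, E v u → u ∈ (attrStep VR E)^[n] F →
      σ v ∈ (attrStep VR E)^[n] F)
    {n : ℕ} {p : ℕ → V} (hp : IsConsistentPlay VR E σ p)
    (h0 : p 0 ∈ (attrStep VR E)^[n] F) :
    ∃ i, p i ∈ F := by
  induction n generalizing p with
  | zero => exact ⟨0, h0⟩
  | succ n ih =>
    suffices h1 : p 0 ∈ (attrStep VR E)^[n] F ∨ p 1 ∈ (attrStep VR E)^[n] F by
      rcases h1 with h1 | h1
      · exact ih hp h1
      · obtain ⟨i, hi⟩ := ih hp.tail h1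
        exact ⟨i + 1, hi⟩
    rw [Function.iterate_succ_apply'] at h0
    rcases h0 with (h0 | ⟨hVR, u, hu, hun⟩) | ⟨-, hall⟩
    · exact Or.inl h0
    · exact Or.inr (hp.2 0 hVR ▸ hσ _ hVR u n hu hun)
    · exact Or.inr (hall _ (hp.1 0))

lemma exists_isConsistentPlay_forall_notMem {S : Set V} (hS : attrStep VR E S ⊆ S)
    {σ : V → V} (hσ : ∀ u, E u (σ u)) {v : V} (hv : v ∉ S) :
    ∃ p, p 0 = v ∧ IsConsistentPlay VR E σ p ∧ ∀ i, p i ∉ S := by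
  have hmove :
      ∀ w : {w // w ∉ S}, ∃ u : {w // w ∉ S}, E w u ∧ (w.1 ∈ VR → u.1 = σ w) := by
    rintro ⟨w, hw⟩
    by_cases hVR : w ∈ VR
    · have hσw : σ w ∉ S := fun h => hw (hS (Or.inl (Or.inr ⟨hVR, _, hσ w, h⟩)))
      exact ⟨⟨σ w, hσw⟩, hσ w, fun _ => rfl⟩
    · obtain ⟨u, hu, huS⟩ : ∃ u, E w u ∧ u ∉ S := by
        by_contra! h
        exact hw (hS (Or.inr ⟨hVR, h⟩))
      exact ⟨⟨u, huS⟩, hu, fun h => absurd h hVR⟩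
  choose next hnext using hmove
  refine ⟨fun i => (next^[i] ⟨v, hv⟩).1, rfl, ⟨fun i => ?_, fun i => ?_⟩,
    fun i => (next^[i] _).2⟩
  · simpa only [Function.iterate_succ_apply'] using (hnext _).1
  · simpa only [Function.iterate_succ_apply'] using (hnext _).2

end Plays

section LeastStageSuccessor

variable {V : Type} {E : V → V → Prop}

open Classical

noncomputable def leastStageSuccessor (E : V → V → Prop) (A : ℕ → Set V)
    (htotal : ∀ v, ∃ u, E v u) (v : V) : V :=
  if h : ∃ n u, E v u ∧ u ∈ A n then (Nat.find_spec h).choose else (htotal v).choose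

lemma edge_leastStageSuccessor (A : ℕ → Set V) (htotal : ∀ v, ∃ u, E v u) (v : V) :
    E v (leastStageSuccessor E A htotal v) := by
  unfold leastStageSuccessor
  split_ifs with h
  · exact (Nat.find_spec h).choose_spec.1
  · exact (htotal v).choose_spec

lemma leastStageSuccessor_mem {A : ℕ → Set V} (hA : Monotone A) (htotal : ∀ v, ∃ u, E v u)
    {v u : V} {n : ℕ} (hu : E v u) (hun : u ∈ A n) :
    leastStageSuccessor E A htotal v ∈ A n := by
  have h : ∃ n u, E v u ∧ u ∈ A n := ⟨n, u, hu, hun⟩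
  unfold leastStageSuccessor
  rw [dif_pos h]
  exact hA (Nat.find_min' h ⟨u, hu, hun⟩) (Nat.find_spec h).choose_spec.2

end LeastStageSuccessor

/-- The attractor of F (least fixed point of the one-step attractor
operator, obtained as the union of its iterates starting from F) equals the set
of vertices from which the reachability player has a (memoryless) winning strategy. -/
theorem stmt_2 (V : Type) [Fintype V] (VR : Set V) (E : V → V → Prop) (F : Set V)
    (htotal : ∀ v, ∃ u, E v u) :
    (⋃ i : ℕ, (attrStep VR E)^[i] F) =
      {v | ∃ σ : V → V, (∀ u, E u (σ u)) ∧
        ∀ p : ℕ → V, p 0 = v → (∀ i, E (p i) (p (i + 1))) →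
          (∀ i, p i ∈ VR → p (i + 1) = σ (p i)) → ∃ i, p i ∈ F} := by
  ext v
  refine ⟨fun hv => ?_, fun ⟨σ, hσ, hwin⟩ => ?_⟩
  · obtain ⟨n, hn⟩ := Set.mem_iUnion.1 hv
    let A : ℕ → Set V := fun n => (attrStep VR E)^[n] F
    refine ⟨leastStageSuccessor E A htotal, edge_leastStageSuccessor A htotal,
      fun p hp0 hedge hmove => ?_⟩
    have hp : IsConsistentPlay VR E (leastStageSuccessor E A htotal) p := ⟨hedge, hmove⟩
    have hA : Monotone A := attrStep.monotone_iterate F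
    exact hp.exists_mem_of_mem_iterate
      (fun _ _ _ _ => leastStageSuccessor_mem hA htotal) (hp0 ▸ hn)
  · by_contra hv
    obtain ⟨p, hp0, ⟨hedge, hmove⟩, hout⟩ := exists_isConsistentPlay_forall_notMem
      (attrStep.apply_iUnion_iterate_subset F) hσ hv
    obtain ⟨i, hi⟩ := hwin p hp0 hedge hmove
    exact hout i (Set.mem_iUnion.2 ⟨0, hi⟩)
end

section
/- The translation of a classic sabotage game on an undirected graph Ḡ = (V̄, Ē) into a generalized sabotage game G — with one subdivision vertex v_e per edge e, a hub vertex z from which the saboteur can reach and return from every subdivision vertex, unlimited saboteur budget, and the same final set — preserves the winner: the traveler wins the generalized sabotage game G if and only if she wins the classic sabotage game on Ḡ. -/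
/-- The traveler wins the classic sabotage game on an undirected graph given by
the edge set `Es` (a finset of unordered pairs), trying to reach `F`: she either
is at a final vertex, or she can move along a remaining edge onto a final vertex,
or she can move along a remaining edge so that, whichever single edge the
saboteur then deletes, she keeps winning. -/
inductive TravWinsClassic {V : Type} [DecidableEq V] (F : Set V) :
    Finset (Sym2 V) → V → Prop
  | atFinal {Es : Finset (Sym2 V)} {v : V} : v ∈ F → TravWinsClassic F Es v
  | stepWin {Es : Finset (Sym2 V)} {v u : V} :
      s(v, u) ∈ Es → u ∈ F → TravWinsClassic F Es v
  | step {Es : Finset (Sym2 V)} {v u : V} :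
      s(v, u) ∈ Es →
      (∀ e ∈ Es, TravWinsClassic F (Es.erase e) u) →
      TravWinsClassic F Es v

/-- The traveler wins the generalized sabotage game with perfect information and
unlimited saboteur budget from configuration (t, b, T): she is at a final vertex,
or she moves along her edges to an unmarked final vertex, or she moves to an
unmarked vertex so that after any legal saboteur move-and-mark she keeps winning. -/
inductive TravWinsGen {V : Type} (ET EB : V → V → Prop) (F : Set V) :
    V → V → Set V → Prop
  | atFinal {t b : V} {T : Set V} : t ∈ F → TravWinsGen ET EB F t b T
  | stepWin {t b : V} {T : Set V} (t' : V) :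
      ET t t' → t' ∉ T → t' ∈ F → TravWinsGen ET EB F t b T
  | step {t b : V} {T : Set V} (t' : V) :
      ET t t' → t' ∉ T →
      (∀ (b' : V) (T' : Set V), EB b b' → T ⊆ T' → T' ⊆ T ∪ {b, b'} →
        t' ∉ T' → TravWinsGen ET EB F t' b' T') →
      TravWinsGen ET EB F t b T

/-- Traveler edges of the subdivision-plus-hub construction: `u → v_e` and
`v_e → v` (in both directions) for every edge `e ∈ Es` with endpoint `u` resp. `v`. -/
def hubET {V : Type} [DecidableEq V] (Es : Finset (Sym2 V)) :
    V ⊕ Sym2 V ⊕ Unit → V ⊕ Sym2 V ⊕ Unit → Prop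
  | Sum.inl u, Sum.inr (Sum.inl e) => e ∈ Es ∧ u ∈ e
  | Sum.inr (Sum.inl e), Sum.inl u => e ∈ Es ∧ u ∈ e
  | _, _ => False

/-- Saboteur edges of the subdivision-plus-hub construction: `z → v_e` and
`v_e → z` for every `e ∈ Es`, where `z` is the hub vertex. -/
def hubEB {V : Type} [DecidableEq V] (Es : Finset (Sym2 V)) :
    V ⊕ Sym2 V ⊕ Unit → V ⊕ Sym2 V ⊕ Unit → Prop
  | Sum.inr (Sum.inr _), Sum.inr (Sum.inl e) => e ∈ Es
  | Sum.inr (Sum.inl e), Sum.inr (Sum.inr _) => e ∈ Es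
  | _, _ => False

/-!
One round of the classic game is simulated by two rounds of the generalized game: the traveler
walks `v → v_e → w` along an edge `e ∋ v, w`, the saboteur walks `z → v_{e'} → z` and marks
`v_{e'}` on the way back, so she never needs to mark the vertex the traveler stands on. The
traveler gains only the option of returning from `v_e` to `v`, which never helps her: deleting
edges only hurts the traveler, so if she wins from `v` after some deletion she already wins from
`v` before it.
-/

theorem TravWinsClassic.mono {V : Type} [DecidableEq V] {F : Set V} {R R' : Finset (Sym2 V)}
    {v : V} (h : TravWinsClassic F R v) (hRR' : R ⊆ R') : TravWinsClassic F R' v := by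
  induction h generalizing R' with
  | atFinal hv => exact .atFinal hv
  | stepWin he hu => exact .stepWin (hRR' he) hu
  | @step R v u he _ ih =>
    refine .step (hRR' he) fun e _ => ?_
    by_cases heR : e ∈ R
    · exact ih e heR (Finset.erase_subset_erase e hRR')
    · exact ih _ he ((Finset.erase_subset _ R).trans (Finset.subset_erase.2 ⟨hRR', heR⟩))

theorem TravWinsClassic.of_forall_erase {V : Type} [DecidableEq V] {F : Set V}
    {R : Finset (Sym2 V)} {v u : V} (he : s(v, u) ∈ R)
    (h : ∀ e ∈ R, ∃ w ∈ s(v, u), TravWinsClassic F (R.erase e) w) : TravWinsClassic F R v := by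
  by_cases hstay : ∃ e ∈ R, TravWinsClassic F (R.erase e) v
  · obtain ⟨e, -, hv⟩ := hstay
    exact hv.mono (Finset.erase_subset e R)
  · refine .step he fun e heR => ?_
    obtain ⟨w, hw, hwin⟩ := h e heR
    rcases Sym2.mem_iff.1 hw with rfl | rfl
    · exact absurd ⟨e, heR, hwin⟩ hstay
    · exact hwin

section Hub

variable {V : Type}

abbrev hubVertex : V ⊕ Sym2 V ⊕ Unit := .inr (.inr ())

abbrev edgeVertex (e : Sym2 V) : V ⊕ Sym2 V ⊕ Unit := .inr (.inl e)

open Classical in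
noncomputable def unmarkedEdges (Es : Finset (Sym2 V)) (T : Set (V ⊕ Sym2 V ⊕ Unit)) :
    Finset (Sym2 V) :=
  Es.filter (edgeVertex · ∉ T)

theorem mem_unmarkedEdges {Es : Finset (Sym2 V)} {T : Set (V ⊕ Sym2 V ⊕ Unit)} {e : Sym2 V} :
    e ∈ unmarkedEdges Es T ↔ e ∈ Es ∧ edgeVertex e ∉ T := by
  simp [unmarkedEdges]

variable [DecidableEq V] {Es : Finset (Sym2 V)}

theorem hubET_inl_iff {v : V} {t : V ⊕ Sym2 V ⊕ Unit} :
    hubET Es (.inl v) t ↔ ∃ e ∈ Es, v ∈ e ∧ t = edgeVertex e := by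
  rcases t with _ | _ | _ <;> simp [hubET]

theorem hubET_edgeVertex_iff {e : Sym2 V} {t : V ⊕ Sym2 V ⊕ Unit} :
    hubET Es (edgeVertex e) t ↔ e ∈ Es ∧ ∃ w ∈ e, t = .inl w := by
  rcases t with _ | _ | _ <;> simp [hubET]

theorem hubEB_hubVertex_iff {b : V ⊕ Sym2 V ⊕ Unit} :
    hubEB Es hubVertex b ↔ ∃ e ∈ Es, b = edgeVertex e := by
  rcases b with _ | _ | _ <;> simp [hubEB]

theorem hubEB_edgeVertex_iff {e : Sym2 V} {b : V ⊕ Sym2 V ⊕ Unit} :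
    hubEB Es (edgeVertex e) b ↔ e ∈ Es ∧ b = hubVertex := by
  rcases b with _ | _ | _ <;> simp [hubEB]

theorem travWinsGen_of_round {F : Set (V ⊕ Sym2 V ⊕ Unit)} {T : Set (V ⊕ Sym2 V ⊕ Unit)}
    {v u : V} (he : s(v, u) ∈ Es) (heT : edgeVertex s(v, u) ∉ T) (huT : .inl u ∉ T)
    (h : ∀ e ∈ Es, ∀ T', T ⊆ T' → T' ⊆ T ∪ {hubVertex, edgeVertex e} →
      TravWinsGen (hubET Es) (hubEB Es) F (.inl u) hubVertex T') :
    TravWinsGen (hubET Es) (hubEB Es) F (.inl v) hubVertex T := by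
  refine .step _ (hubET_inl_iff.2 ⟨_, he, Sym2.mem_mk_left v u, rfl⟩) heT
    fun b₁ T₁ hb₁ hTT₁ hT₁ _ => ?_
  obtain ⟨e, heEs, rfl⟩ := hubEB_hubVertex_iff.1 hb₁
  have huT₁ : .inl u ∉ T₁ := fun hu => by simpa [huT] using hT₁ hu
  refine .step _ (hubET_edgeVertex_iff.2 ⟨he, u, Sym2.mem_mk_right v u, rfl⟩) huT₁
    fun b₂ T₂ hb₂ hT₁T₂ hT₂ _ => ?_
  obtain rfl := (hubEB_edgeVertex_iff.1 hb₂).2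
  refine h e heEs T₂ (hTT₁.trans hT₁T₂) fun x hx => ?_
  rcases hT₂ hx with hx | hx
  · exact hT₁ hx
  · rcases hx with rfl | rfl <;> simp

/-- The invariant of the simulation: the saboteur has marked at most the hub and the edge
vertices of edges deleted in the classic game. -/
theorem TravWinsClassic.travWinsGen {F : Set V} {R : Finset (Sym2 V)} {v : V}
    (h : TravWinsClassic F R v) (hR : R ⊆ Es) {T : Set (V ⊕ Sym2 V ⊕ Unit)}
    (hT : T ⊆ insert hubVertex (edgeVertex '' (↑R)ᶜ)) :
    TravWinsGen (hubET Es) (hubEB Es) (.inl '' F) (.inl v) hubVertex T := by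
  induction h generalizing T with
  | atFinal hv => exact .atFinal ⟨_, hv, rfl⟩
  | @stepWin R v u he hu =>
    refine travWinsGen_of_round (hR he) (fun h => ?_) (fun h => ?_)
      fun _ _ _ _ _ => .atFinal ⟨u, hu, rfl⟩
    all_goals simpa [he] using hT h
  | @step R v u he _ ih =>
    refine travWinsGen_of_round (hR he) (fun h => ?_) (fun h => ?_) fun e _ T' hTT' hT' => ?_
    · simpa [he] using hT h
    · simpa using hT h
    -- the deleted classic edge is `e` if still present, otherwise any edge: `s(v, u)`
    obtain ⟨d, hdR, hed⟩ : ∃ d ∈ R, e ∉ R.erase d := by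
      by_cases heR : e ∈ R
      · exact ⟨e, heR, Finset.notMem_erase e R⟩
      · exact ⟨_, he, fun h => heR (Finset.mem_of_mem_erase h)⟩
    refine ih d hdR ((Finset.erase_subset d R).trans hR) fun x hx => ?_
    rcases hT' hx with hx | hx
    · rcases hT hx with hx | ⟨e'', he'', rfl⟩
      · exact .inl hx
      · exact .inr ⟨e'', fun h => he'' (Finset.mem_of_mem_erase h), rfl⟩
    · rcases hx with rfl | rfl
      · exact .inl rfl
      · exact .inr ⟨e, hed, rfl⟩

theorem unmarkedEdges_union_subset_erase (T : Set (V ⊕ Sym2 V ⊕ Unit)) (e : Sym2 V) :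
    unmarkedEdges Es (T ∪ {edgeVertex e, hubVertex}) ⊆ (unmarkedEdges Es T).erase e := by
  intro d hd
  simp only [mem_unmarkedEdges, Set.mem_union, Set.mem_insert_iff, Set.mem_singleton_iff,
    not_or] at hd
  exact Finset.mem_erase.2 ⟨fun h => hd.2.2.1 (h ▸ rfl), mem_unmarkedEdges.2 ⟨hd.1, hd.2.1⟩⟩

theorem travWinsClassic_of_travWinsGen {F : Set V} {t b : V ⊕ Sym2 V ⊕ Unit}
    {T : Set (V ⊕ Sym2 V ⊕ Unit)}
    (h : TravWinsGen (hubET Es) (hubEB Es) (.inl '' F) t b T) :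
    (∀ v, t = .inl v → b = hubVertex → TravWinsClassic F (unmarkedEdges Es T) v) ∧
    (∀ e e', t = edgeVertex e → b = edgeVertex e' → e' ∈ Es →
      ∃ w ∈ e, TravWinsClassic F ((unmarkedEdges Es T).erase e') w) := by
  induction h with
  | atFinal ht =>
    refine ⟨fun v hv _ => ?_, fun e _ hte _ _ => ?_⟩
    · obtain ⟨w, hw, rfl⟩ := ht
      exact .atFinal (Sum.inl_injective hv ▸ hw)
    · simp [hte] at ht
  | stepWin t' hET _ ht' =>
    obtain ⟨w, hw, rfl⟩ := ht'
    refine ⟨fun v hv _ => ?_, fun e _ hte _ _ => ?_⟩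
    · simp [hv, hubET_inl_iff] at hET
    · subst hte
      exact ⟨w, hET.2, .atFinal hw⟩
  | @step t b T t' hET ht' _ ih =>
    refine ⟨fun v hv hb => ?_, fun e e' hte hb he' => ?_⟩
    · subst hv hb
      obtain ⟨e, heEs, hve, rfl⟩ := hubET_inl_iff.1 hET
      obtain ⟨u, rfl⟩ := Sym2.mem_iff_exists.1 hve
      refine .of_forall_erase (mem_unmarkedEdges.2 ⟨heEs, ht'⟩) fun d hd => ?_
      exact (ih _ T (hubEB_hubVertex_iff.2 ⟨d, (mem_unmarkedEdges.1 hd).1, rfl⟩) subset_rfl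
        Set.subset_union_left ht').2 _ d rfl rfl (mem_unmarkedEdges.1 hd).1
    · subst hte hb
      obtain ⟨-, w, hw, rfl⟩ := hubET_edgeVertex_iff.1 hET
      have hwin := (ih hubVertex (T ∪ {edgeVertex e', hubVertex})
        (hubEB_edgeVertex_iff.2 ⟨he', rfl⟩) Set.subset_union_left subset_rfl (by simp [ht'])).1
        w rfl rfl
      exact ⟨w, hw, hwin.mono (unmarkedEdges_union_subset_erase T e')⟩

end Hub

/-- The subdivision-plus-hub translation of a classic sabotage
game into a generalized sabotage game (unlimited budget, same final set)
preserves the winner. -/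
theorem stmt_11 (V : Type) [DecidableEq V] (Es : Finset (Sym2 V)) (F : Set V) (ι : V) :
    TravWinsGen (hubET Es) (hubEB Es) (Sum.inl '' F)
      (Sum.inl ι) (Sum.inr (Sum.inr ())) ∅ ↔
    TravWinsClassic F Es ι := by
  refine ⟨fun h => ?_, fun h => h.travWinsGen subset_rfl (Set.empty_subset _)⟩
  exact ((travWinsClassic_of_travWinsGen h).1 ι rfl rfl).mono fun _ h => (mem_unmarkedEdges.1 h).1
end

section
/- In a finite Büchi game on an arena with V vertices and E edges, if a player has a winning strategy for the Büchi objective (visit F infinitely often), then she has a memoryless winning strategy. -/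
/-!
Fix a winning history strategy `σ` from `v₀` and let `W` be the set of vertices visited by
`σ`-plays from `v₀`. Then `W ⊆ CPre W` for the controllable predecessor `CPre`. Moreover
`W ⊆ A := Attr(F ∩ CPre W)`: the complement of an attractor is a trap, so from a vertex of
`W \ A` player 1 could keep a `σ`-play outside `A` forever, while `σ` forces a visit to `F`,
whose visited vertices all lie in `F ∩ CPre W ⊆ A`. Hence `F ∩ CPre W ⊆ CPre A`, and the
positional strategy that descends in attractor rank outside the target and re-enters `A` from
it visits `F ∩ CPre W` infinitely often from every vertex of `A ∋ v₀`.
-/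

open Set

namespace BuchiGame

variable {V : Type*} (V0 : Set V) (E : V → V → Prop)

theorem exists_ge_of_not_imp_lt (f : ℕ → ℕ) {P : ℕ → Prop} (h : ∀ i, ¬ P i → f (i + 1) < f i)
    (i : ℕ) : ∃ j, i ≤ j ∧ P j := by
  induction hf : f i using Nat.strong_induction_on generalizing i with
  | _ n ih =>
    by_cases hi : P i
    · exact ⟨i, le_rfl, hi⟩
    · obtain ⟨j, hj, hPj⟩ := ih _ (hf ▸ h i hi) (i + 1) rfl
      exact ⟨j, by omega, hPj⟩

theorem exists_seq_of_history {α : Type*} (next : ℕ → List α → α → α) (a : α) :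
    ∃ x : ℕ → α, x 0 = a ∧
      ∀ n, x (n + 1) = next n (List.ofFn fun j : Fin n => x j) (x n) := by
  let run : ℕ → List α × α := fun n =>
    Nat.rec ([], a) (fun n r => (r.1 ++ [r.2], next n r.1 r.2)) n
  have hrun : ∀ n, (run n).1 = List.ofFn fun j : Fin n => (run j).2 := by
    intro n
    induction n with
    | zero => rfl
    | succ n ih =>
      change (run n).1 ++ [(run n).2] = _
      rw [ih, List.ofFn_succ', List.concat_eq_append]
      rfl
  exact ⟨fun n => (run n).2, rfl, fun n => by rw [← hrun]⟩

theorem exists_successor_choice (htotal : ∀ v, ∃ u, E v u) (X : V → Set V) :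
    ∃ σ : V → V, ∀ v, E v (σ v) ∧ ((∃ u, E v u ∧ u ∈ X v) → σ v ∈ X v) := by
  have hpick : ∀ v, ∃ u, E v u ∧ ((∃ u, E v u ∧ u ∈ X v) → u ∈ X v) := by
    intro v
    by_cases hv : ∃ u, E v u ∧ u ∈ X v
    · obtain ⟨u, hu, hX⟩ := hv
      exact ⟨u, hu, fun _ => hX⟩
    · obtain ⟨u, hu⟩ := htotal v
      exact ⟨u, hu, fun h => absurd h hv⟩
  choose σ hσ using hpick
  exact ⟨σ, hσ⟩

def cpre (X : Set V) : Set V :=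
  {v | (v ∈ V0 ∧ ∃ u, E v u ∧ u ∈ X) ∨ (v ∉ V0 ∧ ∀ u, E v u → u ∈ X)}

variable {V0 E}

theorem cpre_mono {X Y : Set V} (h : X ⊆ Y) : cpre V0 E X ⊆ cpre V0 E Y := by
  rintro v (⟨hv, u, hu, hX⟩ | ⟨hv, hall⟩)
  · exact Or.inl ⟨hv, u, hu, h hX⟩
  · exact Or.inr ⟨hv, fun u hu => h (hall u hu)⟩

theorem mem_of_mem_cpre {X : Set V} {v u : V} (hv : v ∈ cpre V0 E X) (hu : E v u)
    (hchoice : v ∈ V0 → (∃ w, E v w ∧ w ∈ X) → u ∈ X) : u ∈ X := by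
  rcases hv with ⟨hv, hex⟩ | ⟨_, hall⟩
  · exact hchoice hv hex
  · exact hall u hu

theorem notMem_of_notMem_cpre {X : Set V} {v u : V} (hv : v ∉ cpre V0 E X) (hu : E v u)
    (hchoice : v ∉ V0 → (∃ w, E v w ∧ w ∉ X) → u ∉ X) : u ∉ X := by
  by_cases h0 : v ∈ V0
  · exact fun hX => hv (Or.inl ⟨h0, u, hu, hX⟩)
  · refine hchoice h0 ?_
    by_contra! hall
    exact hv (Or.inr ⟨h0, hall⟩)

variable (V0 E)

def attrStage (T : Set V) : ℕ → Set V
  | 0 => T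
  | n + 1 => attrStage T n ∪ cpre V0 E (attrStage T n)

def attr (T : Set V) : Set V := ⋃ n, attrStage V0 E T n

noncomputable def attrRank (T : Set V) (v : V) : ℕ := sInf {n | v ∈ attrStage V0 E T n}

variable {V0 E} {T : Set V}

theorem attrStage_mono : Monotone (attrStage V0 E T) :=
  monotone_nat_of_le_succ fun _ => subset_union_left

theorem attrStage_subset_attr (n : ℕ) : attrStage V0 E T n ⊆ attr V0 E T :=
  subset_iUnion (attrStage V0 E T) n

theorem exists_attr_eq_attrStage [Finite V] : ∃ n, attr V0 E T = attrStage V0 E T n := by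
  obtain ⟨n, hn⟩ :=
    WellFoundedGT.monotone_chain_condition ⟨_, attrStage_mono (V0 := V0) (E := E) (T := T)⟩
  refine ⟨n, (iUnion_subset fun m => ?_).antisymm (attrStage_subset_attr n)⟩
  rcases le_total m n with h | h
  · exact attrStage_mono h
  · exact (hn m h).ge

theorem cpre_attr_subset [Finite V] : cpre V0 E (attr V0 E T) ⊆ attr V0 E T := by
  obtain ⟨n, hn⟩ := exists_attr_eq_attrStage (V0 := V0) (E := E) (T := T)
  calc cpre V0 E (attr V0 E T) = cpre V0 E (attrStage V0 E T n) := by rw [hn]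
    _ ⊆ attrStage V0 E T (n + 1) := subset_union_right
    _ ⊆ attr V0 E T := attrStage_subset_attr _

theorem subset_attr : T ⊆ attr V0 E T :=
  attrStage_subset_attr 0

theorem mem_attrStage_attrRank {v : V} (hv : v ∈ attr V0 E T) :
    v ∈ attrStage V0 E T (attrRank V0 E T v) :=
  Nat.sInf_mem (mem_iUnion.1 hv)

theorem attrRank_le {v : V} {n : ℕ} (hv : v ∈ attrStage V0 E T n) : attrRank V0 E T v ≤ n :=
  Nat.sInf_le hv

theorem attrRank_pos_and_mem_cpre {v : V} (hv : v ∈ attr V0 E T) (hT : v ∉ T) :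
    0 < attrRank V0 E T v ∧ v ∈ cpre V0 E (attrStage V0 E T (attrRank V0 E T v - 1)) := by
  have hmem := mem_attrStage_attrRank hv
  obtain ⟨n, hn⟩ : ∃ n, attrRank V0 E T v = n + 1 :=
    Nat.exists_eq_add_one.2 (Nat.pos_of_ne_zero fun h0 => hT (by rwa [h0] at hmem))
  rw [hn] at hmem ⊢
  refine ⟨n.succ_pos, hmem.resolve_left fun h => ?_⟩
  have := attrRank_le h
  omega

theorem exists_positional_buchi (htotal : ∀ v, ∃ u, E v u) (hT : T ⊆ cpre V0 E (attr V0 E T)) :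
    ∃ σ : V → V, (∀ v, E v (σ v)) ∧
      ∀ p : ℕ → V, p 0 ∈ attr V0 E T → (∀ i, E (p i) (p (i + 1))) →
        (∀ i, p i ∈ V0 → p (i + 1) = σ (p i)) → ∀ N, ∃ i, N ≤ i ∧ p i ∈ T := by
  classical
  let target : V → Set V := fun v =>
    if v ∈ T then attr V0 E T else attrStage V0 E T (attrRank V0 E T v - 1)
  have htarget_subset : ∀ v, target v ⊆ attr V0 E T := by
    intro v
    dsimp only [target]
    split_ifs
    · exact subset_rfl
    · exact attrStage_subset_attr _
  have hcpre_target : ∀ v ∈ attr V0 E T, v ∈ cpre V0 E (target v) := by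
    intro v hv
    dsimp only [target]
    split_ifs with hvT
    · exact hT hvT
    · exact (attrRank_pos_and_mem_cpre hv hvT).2
  obtain ⟨σ, hσ⟩ := exists_successor_choice E htotal target
  refine ⟨σ, fun v => (hσ v).1, fun p hp0 hE hc => ?_⟩
  have hstep : ∀ i, p i ∈ attr V0 E T → p (i + 1) ∈ target (p i) := fun i hi =>
    mem_of_mem_cpre (hcpre_target _ hi) (hE i) fun h0 hex => hc i h0 ▸ (hσ _).2 hex
  have hattr : ∀ i, p i ∈ attr V0 E T := by
    intro i
    induction i with
    | zero => exact hp0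
    | succ i ih => exact htarget_subset _ (hstep i ih)
  refine exists_ge_of_not_imp_lt (fun i => attrRank V0 E T (p i)) fun i hi => ?_
  have hpos := (attrRank_pos_and_mem_cpre (hattr i) hi).1
  have hnext : p (i + 1) ∈ attrStage V0 E T (attrRank V0 E T (p i) - 1) := by
    simpa [target, hi] using hstep i (hattr i)
  have := attrRank_le hnext
  omega

variable (V0 E) in
def IsConsistentPlay (σ : List V → V) (v : V) (p : ℕ → V) : Prop :=
  p 0 = v ∧ (∀ i, E (p i) (p (i + 1))) ∧
    ∀ i, p i ∈ V0 → p (i + 1) = σ (List.ofFn fun j : Fin (i + 1) => p j)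

variable (V0 E) in
def visited (σ : List V → V) (v : V) : Set V :=
  {u | ∃ p i, IsConsistentPlay V0 E σ v p ∧ p i = u}

variable {σ : List V → V} {v : V}

theorem exists_consistentPlay_extending (hσ : ∀ l w, E w (σ (l ++ [w])))
    {τ : V → V} (hτ : ∀ w, E w (τ w)) {p : ℕ → V} {k : ℕ} (hp0 : p 0 = v)
    (hE : ∀ i < k, E (p i) (p (i + 1)))
    (hc : ∀ i < k, p i ∈ V0 → p (i + 1) = σ (List.ofFn fun j : Fin (i + 1) => p j)) :
    ∃ q, IsConsistentPlay V0 E σ v q ∧ (∀ i ≤ k, q i = p i) ∧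
      ∀ i, k ≤ i → q i ∉ V0 → q (i + 1) = τ (q i) := by
  classical
  obtain ⟨q, hq0, hq⟩ := exists_seq_of_history
    (fun n l c => if n < k then p (n + 1) else if c ∈ V0 then σ (l ++ [c]) else τ c) v
  have hhist : ∀ n, (List.ofFn fun j : Fin (n + 1) => q j) =
      (List.ofFn fun j : Fin n => q j) ++ [q n] := by
    intro n
    rw [List.ofFn_succ', List.concat_eq_append]
    rfl
  have hqp : ∀ i ≤ k, q i = p i := by
    intro i hi
    induction i with
    | zero => rw [hq0, hp0]
    | succ i ih => rw [hq, if_pos (by omega)]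
  have hlate : ∀ i, k ≤ i → q (i + 1) =
      if q i ∈ V0 then σ (List.ofFn fun j : Fin (i + 1) => q j) else τ (q i) := by
    intro i hi
    rw [hq, if_neg (by omega), hhist]
  refine ⟨q, ⟨hq0, fun i => ?_, fun i hi => ?_⟩, hqp,
    fun i hi h0 => by rw [hlate i hi, if_neg h0]⟩
  · rcases lt_or_ge i k with hik | hik
    · rw [hqp i hik.le, hqp (i + 1) hik]
      exact hE i hik
    · rw [hlate i hik]
      split_ifs
      · rw [hhist]
        exact hσ _ _
      · exact hτ _
  · rcases lt_or_ge i k with hik | hik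
    · have hpre : (List.ofFn fun j : Fin (i + 1) => q j) = List.ofFn fun j : Fin (i + 1) => p j :=
        congrArg List.ofFn (funext fun j => hqp j (by omega))
      rw [hqp (i + 1) hik, hpre]
      exact hc i hik (hqp i hik.le ▸ hi)
    · rw [hlate i hik, if_pos hi]

theorem mem_visited (htotal : ∀ v, ∃ u, E v u) (hσ : ∀ l w, E w (σ (l ++ [w]))) :
    v ∈ visited V0 E σ v := by
  choose τ hτ using htotal
  obtain ⟨q, hq, -⟩ := exists_consistentPlay_extending (k := 0) (p := fun _ => v) hσ hτ rfl
    (by simp) (by simp)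
  exact ⟨q, 0, hq, hq.1⟩

theorem visited_subset_cpre (htotal : ∀ v, ∃ u, E v u) (hσ : ∀ l w, E w (σ (l ++ [w]))) :
    visited V0 E σ v ⊆ cpre V0 E (visited V0 E σ v) := by
  classical
  rintro _ ⟨p, k, hp, rfl⟩
  by_cases h0 : p k ∈ V0
  · exact Or.inl ⟨h0, p (k + 1), hp.2.1 k, p, k + 1, hp, rfl⟩
  refine Or.inr ⟨h0, fun u hu => ?_⟩
  choose τ₀ hτ₀ using htotal
  let τ : V → V := fun w => if w = p k then u else τ₀ w
  have hτ : ∀ w, E w (τ w) := by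
    intro w
    dsimp only [τ]
    split_ifs with h
    · exact h ▸ hu
    · exact hτ₀ w
  obtain ⟨q, hq, hqp, hqτ⟩ := exists_consistentPlay_extending (k := k) hσ hτ hp.1
    (fun i _ => hp.2.1 i) (fun i _ => hp.2.2 i)
  refine ⟨q, k + 1, hq, ?_⟩
  rw [hqτ k le_rfl (by rwa [hqp k le_rfl]), hqp k le_rfl]
  simp [τ]

theorem visited_subset_attr [Finite V] {F : Set V} (htotal : ∀ v, ∃ u, E v u)
    (hσ : ∀ l w, E w (σ (l ++ [w])))
    (hwin : ∀ p, IsConsistentPlay V0 E σ v p → ∀ N, ∃ i, N ≤ i ∧ p i ∈ F) :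
    visited V0 E σ v ⊆ attr V0 E (F ∩ cpre V0 E (visited V0 E σ v)) := by
  set A := attr V0 E (F ∩ cpre V0 E (visited V0 E σ v))
  rintro _ ⟨p, k, hp, rfl⟩
  by_contra hk
  obtain ⟨τ, hτ⟩ := exists_successor_choice E htotal fun _ => Aᶜ
  obtain ⟨q, hq, hqp, hqτ⟩ := exists_consistentPlay_extending (k := k) hσ (fun w => (hτ w).1)
    hp.1 (fun i _ => hp.2.1 i) (fun i _ => hp.2.2 i)
  have hout : ∀ i, k ≤ i → q i ∉ A := by
    intro i hi
    induction i, hi using Nat.le_induction with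
    | base => rwa [hqp k le_rfl]
    | succ i hi ih =>
      exact notMem_of_notMem_cpre (fun h => ih (cpre_attr_subset h)) (hq.2.1 i)
        fun h0 hex => hqτ i hi h0 ▸ (hτ _).2 hex
  obtain ⟨i, hi, hF⟩ := hwin q hq k
  exact hout i hi (subset_attr ⟨hF, visited_subset_cpre htotal hσ ⟨q, i, hq, rfl⟩⟩)

end BuchiGame

open BuchiGame

/-- In a finite Büchi game, if a player has a (history-dependent)
winning strategy for the Büchi objective (visit F infinitely often), then she
has a memoryless winning strategy. -/
theorem stmt_14 (V : Type) [Fintype V] (V0 : Set V) (E : V → V → Prop) (F : Set V)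
    (htotal : ∀ v, ∃ u, E v u) (v0 : V)
    (hwin : ∃ σ : List V → V, (∀ (l : List V) (v : V), E v (σ (l ++ [v]))) ∧
      ∀ p : ℕ → V, p 0 = v0 → (∀ i, E (p i) (p (i + 1))) →
        (∀ i, p i ∈ V0 → p (i + 1) = σ (List.ofFn fun j : Fin (i + 1) => p j)) →
        ∀ N, ∃ i, N ≤ i ∧ p i ∈ F) :
    ∃ σ : V → V, (∀ v, E v (σ v)) ∧
      ∀ p : ℕ → V, p 0 = v0 → (∀ i, E (p i) (p (i + 1))) →
        (∀ i, p i ∈ V0 → p (i + 1) = σ (p i)) →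
        ∀ N, ∃ i, N ≤ i ∧ p i ∈ F := by
  obtain ⟨τ, hτE, hτwin⟩ := hwin
  have hvisited := visited_subset_attr htotal hτE fun p hp => hτwin p hp.1 hp.2.1 hp.2.2
  obtain ⟨σ, hσE, hσwin⟩ := exists_positional_buchi htotal fun _ hv => cpre_mono hvisited hv.2
  refine ⟨σ, hσE, fun p hp0 hE hc N => ?_⟩
  obtain ⟨i, hi, hF, -⟩ := hσwin p (hp0 ▸ hvisited (mem_visited htotal hτE)) hE hc N
  exact ⟨i, hi, hF⟩
end
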